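/- Let S be a nonempty set, s₀ ∈ S, and let K, K' : S × S → ℂ be conditionally positive definite kernels such that K(s,s) = K'(s,s) = 0 and K(s,s₀), K'(s,s₀) are real for all s ∈ S. Let F be a complex Hilbert space and V : S → F a map such that ⟨V(s), V(t)⟩ = (1/2)(K(s,t) − K(s,s₀) − K(s₀,t) + K(s₀,s₀)) for all s,t ∈ S and the linear span of V(S) is dense in F. Then K − K' is conditionally positive definite if and only if there exists a positive contraction C ∈ B(F) (C ≥ 0 and ‖C‖ ≤ 1) such that K'(s,t) = 2⟨C V(s), C V(t)⟩ − ⟨C V(s), C V(s)⟩ − ⟨C V(t), C V(t)⟩ for all s,t ∈ S. -/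

import Mathlib

/-!
Write `M_K(s,t) = ½ (K(s,t) - K(s,s₀) - K(s₀,t) + K(s₀,s₀))` (`centeredKernel K s₀`). On
coefficient vectors with `∑ cᵢ = 0` the quadratic forms of `K` and `2 M_K` agree, and `M_K`
vanishes as soon as one argument is `s₀`; adjoining `s₀` with coefficient `-∑ cᵢ` therefore shows
that `K` is conditionally positive definite iff `M_K` is positive semidefinite. The hypothesis on
`V` says `M_K(s,t) = ⟪V s, V t⟫`, so `K - K'` is conditionally positive definite iff
`⟪V s, V t⟫ - M_{K'}(s,t)` is positive semidefinite, and `M_{K'}` itself is positive semidefinite.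

Such an `M_{K'}` is a positive sesquilinear form on the span of `V` dominated by the inner product,
hence bounded by Cauchy–Schwarz; it extends to a positive operator `T` with `‖T‖ ≤ 1` and
`M_{K'}(s,t) = ⟪T V s, V t⟫`, and `C = √T` works. Conversely `⟪V s, V t⟫ - ⟪C V s, C V t⟫` is
positive semidefinite because `‖C x‖ ≤ ‖x‖`. Since `V s₀ = 0`, the formula for `K'` in terms of
`C` is equivalent to `M_{K'}(s,t) = ⟪C V s, C V t⟫`.
-/

open scoped ComplexOrder

/-- A scalar kernel `K` is conditionally positive definite if it is hermitian and for every
`n ≥ 2`, all `s₁, …, sₙ ∈ S` and all `c₁, …, cₙ ∈ ℂ` with `∑ᵢ cᵢ = 0`, the number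
`∑ᵢⱼ conj(cᵢ) cⱼ K(sᵢ, sⱼ)` is real and nonnegative (here expressed via the order on `ℂ`). -/
def IsCondPosDefKernelC {S : Type*} (K : S → S → ℂ) : Prop :=
  ∀ (n : ℕ), 2 ≤ n → ∀ (s : Fin n → S) (c : Fin n → ℂ), (∑ i, c i) = 0 →
    0 ≤ ∑ i, ∑ j, (starRingEnd ℂ) (c i) * c j * K (s i) (s j)

open scoped InnerProductSpace
open ComplexConjugate RCLike

section Kernel

variable {S : Type*}

def IsPosSemidefKernel (K : S → S → ℂ) : Prop :=
  ∀ (n : ℕ) (s : Fin n → S) (c : Fin n → ℂ), 0 ≤ ∑ i, ∑ j, conj (c i) * c j * K (s i) (s j)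

noncomputable def centeredKernel (K : S → S → ℂ) (s₀ s t : S) : ℂ :=
  2⁻¹ * (K s t - K s s₀ - K s₀ t + K s₀ s₀)

lemma sum_sum_conj_mul_mul_add_eq_zero {n : ℕ} {c : Fin n → ℂ} (hc : ∑ i, c i = 0)
    (f g : Fin n → ℂ) : ∑ i, ∑ j, conj (c i) * c j * (f i + g j) = 0 := by
  have hc' : ∑ i, conj (c i) = 0 := by rw [← map_sum, hc, map_zero]
  simp only [mul_add, Finset.sum_add_distrib]
  simp_rw [mul_right_comm _ (c _) (f _), mul_assoc (conj _) (c _) (g _), ← Finset.mul_sum,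
    ← Finset.sum_mul, hc, hc']
  simp

lemma sum_sum_eq_two_mul_centeredKernel {n : ℕ} {c : Fin n → ℂ} (hc : ∑ i, c i = 0)
    (K : S → S → ℂ) (s₀ : S) (s : Fin n → S) :
    ∑ i, ∑ j, conj (c i) * c j * K (s i) (s j)
      = 2 * ∑ i, ∑ j, conj (c i) * c j * centeredKernel K s₀ (s i) (s j) := by
  have hsplit : ∀ i j, conj (c i) * c j * K (s i) (s j)
      = 2 * (conj (c i) * c j * centeredKernel K s₀ (s i) (s j))
        + conj (c i) * c j * ((K (s i) s₀ - K s₀ s₀) + K s₀ (s j)) := by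
    intro i j; unfold centeredKernel; ring
  simp only [hsplit, Finset.sum_add_distrib, ← Finset.mul_sum,
    sum_sum_conj_mul_mul_add_eq_zero hc, add_zero]

@[simp] lemma centeredKernel_basepoint_left (K : S → S → ℂ) (s₀ t : S) :
    centeredKernel K s₀ s₀ t = 0 := by
  unfold centeredKernel; ring

@[simp] lemma centeredKernel_basepoint_right (K : S → S → ℂ) (s₀ s : S) :
    centeredKernel K s₀ s s₀ = 0 := by
  unfold centeredKernel; ring

lemma sum_sum_cons_centeredKernel {n : ℕ} (K : S → S → ℂ) (s₀ : S) (s : Fin n → S)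
    (a : ℂ) (c : Fin n → ℂ) :
    ∑ i, ∑ j, conj ((Fin.cons a c : Fin (n + 1) → ℂ) i) * (Fin.cons a c : Fin (n + 1) → ℂ) j
        * centeredKernel K s₀ ((Fin.cons s₀ s : Fin (n + 1) → S) i)
          ((Fin.cons s₀ s : Fin (n + 1) → S) j)
      = ∑ i, ∑ j, conj (c i) * c j * centeredKernel K s₀ (s i) (s j) := by
  simp [Fin.sum_univ_succ]

theorem isCondPosDefKernelC_iff_isPosSemidefKernel_centeredKernel (K : S → S → ℂ) (s₀ : S) :
    IsCondPosDefKernelC K ↔ IsPosSemidefKernel (centeredKernel K s₀) := by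
  constructor
  · intro hK n s c
    -- `s₀` is adjoined twice only to have at least two points.
    have hsum : ∑ i, (Fin.cons (-∑ i, c i) (Fin.cons 0 c) : Fin (n + 2) → ℂ) i = 0 := by
      simp [Fin.sum_univ_succ]
    have h := hK (n + 2) (by omega) (Fin.cons s₀ (Fin.cons s₀ s)) _ hsum
    rw [sum_sum_eq_two_mul_centeredKernel hsum K s₀, sum_sum_cons_centeredKernel,
      sum_sum_cons_centeredKernel] at h
    have h' := mul_nonneg (inv_nonneg.mpr zero_le_two) h
    rwa [inv_mul_cancel_left₀ two_ne_zero] at h'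
  · intro hK n _ s c hc
    rw [sum_sum_eq_two_mul_centeredKernel hc K s₀]
    exact mul_nonneg zero_le_two (hK n s c)

lemma centeredKernel_conj {K : S → S → ℂ} (hK : ∀ s t, K t s = conj (K s t)) (s₀ s t : S) :
    conj (centeredKernel K s₀ s t) = centeredKernel K s₀ t s := by
  simp only [centeredKernel, map_mul, map_inv₀, map_ofNat, map_add, map_sub, ← hK]
  ring

lemma forall_eq_two_mul_sub_iff_centeredKernel_eq {K G : S → S → ℂ} {s₀ : S}
    (hK : ∀ s t, K t s = conj (K s t)) (hdiag : ∀ s, K s s = 0) (hreal : ∀ s, (K s s₀).im = 0)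
    (hG : ∀ s, G s s₀ = 0) (hG' : ∀ t, G s₀ t = 0) :
    (∀ s t, K s t = 2 * G s t - G s s - G t t) ↔ ∀ s t, centeredKernel K s₀ s t = G s t := by
  constructor
  · intro h s t
    simp only [centeredKernel, h, hG, hG']
    ring
  · intro h s t
    have hsym : ∀ s, K s₀ s = K s s₀ := fun s => by
      rw [hK, Complex.conj_eq_iff_im.mpr (hreal s)]
    simp only [← h, centeredKernel, hsym, hdiag]
    ring

end Kernel

section SesqForm

variable {𝕜 S : Type*} [RCLike 𝕜]

noncomputable def kernelSesqForm (M : S → S → 𝕜) : (S →₀ 𝕜) →ₗ⋆[𝕜] (S →₀ 𝕜) →ₗ[𝕜] 𝕜 :=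
  LinearMap.mk₂'ₛₗ (starRingEnd 𝕜) (RingHom.id 𝕜)
    (fun d e => d.sum fun s a => e.sum fun t b => conj a * b * M s t)
    (fun d₁ d₂ e => by
      rw [Finsupp.sum_add_index'] <;> simp [add_mul, Finsupp.sum_add])
    (fun r d e => by
      rw [Finsupp.sum_smul_index'] <;> simp [Finsupp.mul_sum, mul_assoc])
    (fun d e₁ e₂ => by
      simp only [← Finsupp.sum_add]
      congr 1; ext s a
      rw [Finsupp.sum_add_index'] <;> simp [mul_add, add_mul])
    (fun r d e => by
      simp only [Finsupp.mul_sum, RingHom.id_apply, smul_eq_mul]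
      congr 1; ext s a
      rw [Finsupp.sum_smul_index' fun t => by simp only [mul_zero, zero_mul]]
      exact Finset.sum_congr rfl fun t _ => by simp only [smul_eq_mul]; ring)

@[simp] lemma kernelSesqForm_single_single (M : S → S → 𝕜) (s t : S) (a b : 𝕜) :
    kernelSesqForm M (Finsupp.single s a) (Finsupp.single t b) = conj a * b * M s t := by
  simp [kernelSesqForm]

lemma kernelSesqForm_sub (M N : S → S → 𝕜) :
    kernelSesqForm (M - N) = kernelSesqForm M - kernelSesqForm N := by
  refine Finsupp.lhom_ext fun s a => LinearMap.ext fun e => ?_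
  induction e using Finsupp.induction_linear with
  | zero => simp
  | add e₁ e₂ h₁ h₂ => simp_all [map_add]
  | single t b => simp [mul_sub]

lemma kernelSesqForm_isSymm {M : S → S → 𝕜} (hM : ∀ s t, conj (M s t) = M t s) :
    (kernelSesqForm M).IsSymm := by
  refine ⟨fun d e => ?_⟩
  induction d using Finsupp.induction_linear with
  | zero => simp
  | add d₁ d₂ h₁ h₂ => simp_all [map_add]
  | single s a =>
    induction e using Finsupp.induction_linear with
    | zero => simp
    | add e₁ e₂ h₁ h₂ => simp_all [map_add]
    | single t b =>
      simp only [kernelSesqForm_single_single, map_mul, RCLike.conj_conj, hM s t]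
      ring

lemma kernelSesqForm_sum_single {ι : Type*} [Fintype ι] (M : S → S → 𝕜) (s : ι → S)
    (c : ι → 𝕜) :
    kernelSesqForm M (∑ i, Finsupp.single (s i) (c i)) (∑ j, Finsupp.single (s j) (c j))
      = ∑ i, ∑ j, conj (c i) * c j * M (s i) (s j) := by
  simp only [map_sum, LinearMap.sum_apply, kernelSesqForm_single_single]
  exact Finset.sum_comm

lemma kernelSesqForm_inner {F : Type*} [NormedAddCommGroup F] [InnerProductSpace 𝕜 F]
    (V : S → F) (d e : S →₀ 𝕜) :
    kernelSesqForm (fun s t => ⟪V s, V t⟫_𝕜) d e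
      = ⟪Finsupp.linearCombination 𝕜 V d, Finsupp.linearCombination 𝕜 V e⟫_𝕜 := by
  induction d using Finsupp.induction_linear with
  | zero => simp
  | add d₁ d₂ h₁ h₂ => simp_all [map_add, inner_add_left]
  | single s a =>
    induction e using Finsupp.induction_linear with
    | zero => simp
    | add e₁ e₂ h₁ h₂ => simp_all [map_add, inner_add_right]
    | single t b =>
      simp only [kernelSesqForm_single_single, Finsupp.linearCombination_single,
        inner_smul_right, inner_smul_left]
      ring

end SesqForm

section Operator

variable {𝕜 E F : Type*} [RCLike 𝕜] [AddCommGroup E] [Module 𝕜 E]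

lemma LinearMap.IsPosSemidef.norm_apply_mul_norm_apply_le {B : E →ₗ⋆[𝕜] E →ₗ[𝕜] 𝕜}
    (hB : B.IsPosSemidef) (x y : E) :
    ‖B x y‖ * ‖B y x‖ ≤ re (B x x) * re (B y y) :=
  let core : PreInnerProductSpace.Core 𝕜 E :=
    { inner := fun x y => B x y
      conj_inner_symm := fun x y => hB.isSymm.eq y x
      re_inner_nonneg := fun x => RCLike.nonneg_iff.mp (hB.isNonneg.nonneg x) |>.1
      add_left := fun x y z => by simp
      smul_left := fun x y r => by simp }
  InnerProductSpace.Core.inner_mul_inner_self_le (c := core) x y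

variable [NormedAddCommGroup F] [InnerProductSpace 𝕜 F]

lemma exists_continuousLinearMap_inner_eq_of_norm_le [CompleteSpace F] {Φ : E →ₗ[𝕜] F}
    (hΦ : DenseRange Φ) {B : E →ₗ⋆[𝕜] E →ₗ[𝕜] 𝕜} (hB : ∀ x y, ‖B x y‖ ≤ ‖Φ x‖ * ‖Φ y‖) :
    ∃ T : F →L[𝕜] F, ‖T‖ ≤ 1 ∧ ∀ x y, ⟪T (Φ x), Φ y⟫_𝕜 = B x y := by
  have hext : ∀ x y, (B x).extendOfNorm Φ (Φ y) = B x y := fun x y =>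
    LinearMap.extendOfNorm_eq hΦ ⟨_, hB x⟩ y
  let B₁ : E →ₗ⋆[𝕜] F →L[𝕜] 𝕜 :=
    { toFun := fun x => (B x).extendOfNorm Φ
      map_add' := fun x₁ x₂ =>
        LinearMap.extendOfNorm_unique hΦ _ (hB (x₁ + x₂)) _ (by ext y; simp [hext])
      map_smul' := fun r x =>
        LinearMap.extendOfNorm_unique hΦ _ (hB (r • x)) _ (by ext y; simp [hext]) }
  have hB₁ : ∀ x, ‖B₁ x‖ ≤ 1 * ‖Φ x‖ := fun x => by
    rw [one_mul]
    exact LinearMap.opNorm_extendOfNorm_le hΦ (norm_nonneg _) (hB x)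
  let B₂ : F →L⋆[𝕜] F →L[𝕜] 𝕜 := B₁.extendOfNorm Φ
  refine ⟨InnerProductSpace.continuousLinearMapOfBilin B₂, ?_, fun x y => ?_⟩
  · refine ContinuousLinearMap.opNorm_le_bound _ zero_le_one fun v => ?_
    simpa [InnerProductSpace.continuousLinearMapOfBilin] using
      B₂.le_of_opNorm_le (LinearMap.opNorm_extendOfNorm_le hΦ zero_le_one hB₁) v
  · rw [InnerProductSpace.continuousLinearMapOfBilin_apply,
      LinearMap.extendOfNorm_eq hΦ ⟨1, hB₁⟩]
    exact hext x y

lemma ContinuousLinearMap.isPositive_of_inner_eq {Φ : E →ₗ[𝕜] F} (hΦ : DenseRange Φ)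
    {B : E →ₗ⋆[𝕜] E →ₗ[𝕜] 𝕜} (hB : B.IsPosSemidef) {T : F →L[𝕜] F}
    (hT : ∀ x y, ⟪T (Φ x), Φ y⟫_𝕜 = B x y) : T.IsPositive := by
  refine (T.isPositive_iff).mpr ⟨fun u v => ?_, fun u => ?_⟩
  · refine (hΦ.prodMap hΦ).induction_on (p := fun p : F × F => ⟪T p.1, p.2⟫_𝕜 = ⟪p.1, T p.2⟫_𝕜)
      (u, v) (isClosed_eq (by fun_prop) (by fun_prop)) fun p => ?_
    simp only [Prod.map_fst, Prod.map_snd]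
    rw [hT, ← inner_conj_symm, hT, hB.isSymm.eq]
  · refine hΦ.induction_on u (isClosed_le continuous_const (by fun_prop)) fun x => ?_
    rw [hT]
    exact hB.isNonneg.nonneg x

lemma exists_isPositive_inner_eq_of_isPosSemidef [CompleteSpace F] {Φ : E →ₗ[𝕜] F}
    (hΦ : DenseRange Φ) {B : E →ₗ⋆[𝕜] E →ₗ[𝕜] 𝕜} (hB : B.IsPosSemidef)
    (hle : ∀ x, re (B x x) ≤ ‖Φ x‖ ^ 2) :
    ∃ T : F →L[𝕜] F, T.IsPositive ∧ ‖T‖ ≤ 1 ∧ ∀ x y, ⟪T (Φ x), Φ y⟫_𝕜 = B x y := by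
  have hbound : ∀ x y, ‖B x y‖ ≤ ‖Φ x‖ * ‖Φ y‖ := fun x y => by
    have hcs := hB.norm_apply_mul_norm_apply_le x y
    rw [← hB.isSymm.eq x y, RCLike.norm_conj] at hcs
    have hy := RCLike.nonneg_iff.mp (hB.isNonneg.nonneg y) |>.1
    have hsq : ‖B x y‖ ^ 2 ≤ (‖Φ x‖ * ‖Φ y‖) ^ 2 := by
      rw [sq, mul_pow]
      exact hcs.trans (mul_le_mul (hle x) (hle y) hy (sq_nonneg _))
    exact (pow_le_pow_iff_left₀ (norm_nonneg _) (by positivity) two_ne_zero).mp hsq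
  obtain ⟨T, hT1, hT⟩ := exists_continuousLinearMap_inner_eq_of_norm_le hΦ hbound
  exact ⟨T, T.isPositive_of_inner_eq hΦ hB hT, hT1, hT⟩

lemma exists_isPositive_norm_le_one_inner_eq_of_isPosSemidef {E F : Type*} [AddCommGroup E]
    [Module ℂ E] [NormedAddCommGroup F] [InnerProductSpace ℂ F] [CompleteSpace F]
    {Φ : E →ₗ[ℂ] F} (hΦ : DenseRange Φ) {B : E →ₗ⋆[ℂ] E →ₗ[ℂ] ℂ} (hB : B.IsPosSemidef)
    (hle : ∀ x, (B x x).re ≤ ‖Φ x‖ ^ 2) :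
    ∃ C : F →L[ℂ] F, C.IsPositive ∧ ‖C‖ ≤ 1 ∧ ∀ x y, ⟪C (Φ x), C (Φ y)⟫_ℂ = B x y := by
  obtain ⟨T, hTpos, hT1, hT⟩ := exists_isPositive_inner_eq_of_isPosSemidef hΦ hB hle
  have hT0 : 0 ≤ T := (T.nonneg_iff_isPositive).mpr hTpos
  have hC := (ContinuousLinearMap.nonneg_iff_isPositive _).mp (CFC.sqrt_nonneg T)
  refine ⟨CFC.sqrt T, hC, ?_, fun x y => ?_⟩
  · rw [CFC.norm_sqrt T]
    exact Real.sqrt_le_one.mpr hT1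
  · calc ⟪CFC.sqrt T (Φ x), CFC.sqrt T (Φ y)⟫_ℂ = ⟪CFC.sqrt T (CFC.sqrt T (Φ x)), Φ y⟫_ℂ :=
          (hC.isSymmetric _ _).symm
      _ = B x y := by rw [← mul_apply_eq_comp, CFC.sqrt_mul_sqrt_self T, hT]

end Operator

section PosSemidefKernel

variable {S F : Type*} [NormedAddCommGroup F] [InnerProductSpace ℂ F]

lemma IsPosSemidefKernel.isNonneg_kernelSesqForm {M : S → S → ℂ} (hM : IsPosSemidefKernel M) :
    (kernelSesqForm M).IsNonneg := by
  refine ⟨fun d => ?_⟩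
  let e := d.support.equivFin
  have hd : d = ∑ k, Finsupp.single (e.symm k : S) (d (e.symm k)) := by
    conv_lhs => rw [← Finsupp.sum_single d]
    rw [Finsupp.sum, ← Finset.sum_coe_sort, ← e.symm.sum_comp]
  rw [hd, kernelSesqForm_sum_single]
  exact hM _ _ _

lemma sum_sum_inner {n : ℕ} (W : S → F) (s : Fin n → S) (c : Fin n → ℂ) :
    ∑ i, ∑ j, conj (c i) * c j * ⟪W (s i), W (s j)⟫_ℂ
      = ⟪∑ i, c i • W (s i), ∑ j, c j • W (s j)⟫_ℂ := by
  rw [sum_inner]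
  refine Finset.sum_congr rfl fun i _ => ?_
  rw [inner_smul_left, inner_sum, Finset.mul_sum]
  refine Finset.sum_congr rfl fun j _ => ?_
  rw [inner_smul_right, mul_assoc]

lemma isPosSemidefKernel_inner_sub_inner {C : F →L[ℂ] F} (hC : ‖C‖ ≤ 1) (V : S → F) :
    IsPosSemidefKernel fun s t => ⟪V s, V t⟫_ℂ - ⟪C (V s), C (V t)⟫_ℂ := by
  intro n s c
  set x := ∑ i, c i • V (s i)
  have hCx : ∑ i, c i • C (V (s i)) = C x := by simp [x, map_sum]
  simp only [mul_sub, Finset.sum_sub_distrib]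
  rw [sum_sum_inner V, sum_sum_inner (fun s => C (V s)), hCx, inner_self_eq_norm_sq_to_K,
    inner_self_eq_norm_sq_to_K, sub_nonneg]
  have hCx_le : ‖C x‖ ≤ ‖x‖ := (C.le_of_opNorm_le hC x).trans_eq (one_mul _)
  exact_mod_cast pow_le_pow_left₀ (norm_nonneg _) hCx_le 2

theorem isPosSemidefKernel_inner_sub_iff_exists_contraction [CompleteSpace F] {V : S → F}
    (hV : Dense (Submodule.span ℂ (Set.range V) : Set F)) {M : S → S → ℂ}
    (hM : IsPosSemidefKernel M) (hMconj : ∀ s t, conj (M s t) = M t s) :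
    IsPosSemidefKernel (fun s t => ⟪V s, V t⟫_ℂ - M s t) ↔
      ∃ C : F →L[ℂ] F, C.IsPositive ∧ ‖C‖ ≤ 1 ∧ ∀ s t, M s t = ⟪C (V s), C (V t)⟫_ℂ := by
  constructor
  · intro hle
    let Φ := Finsupp.linearCombination ℂ V
    have hΦ : DenseRange Φ := by
      rwa [DenseRange, ← LinearMap.coe_range, Finsupp.range_linearCombination]
    have hB : (kernelSesqForm M).IsPosSemidef :=
      ⟨kernelSesqForm_isSymm hMconj, hM.isNonneg_kernelSesqForm⟩
    have hBle : ∀ d, (kernelSesqForm M d d).re ≤ ‖Φ d‖ ^ 2 := fun d => by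
      have h := hle.isNonneg_kernelSesqForm.nonneg d
      rw [show (fun s t => ⟪V s, V t⟫_ℂ - M s t) = (fun s t => ⟪V s, V t⟫_ℂ) - M from rfl,
        kernelSesqForm_sub, LinearMap.sub_apply, LinearMap.sub_apply, kernelSesqForm_inner,
        inner_self_eq_norm_sq_to_K, sub_nonneg] at h
      exact_mod_cast (Complex.le_def.mp h).1
    obtain ⟨C, hCpos, hC1, hC⟩ :=
      exists_isPositive_norm_le_one_inner_eq_of_isPosSemidef hΦ hB hBle
    refine ⟨C, hCpos, hC1, fun s t => ?_⟩
    simpa [Φ] using (hC (Finsupp.single s 1) (Finsupp.single t 1)).symm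
  · rintro ⟨C, -, hC1, hC⟩
    simpa only [hC] using isPosSemidefKernel_inner_sub_inner hC1 V

end PosSemidefKernel

theorem condPosDef_order_iff_exists_contraction_general {S : Type*} (s₀ : S)
    (K K' : S → S → ℂ)
    (hK' : ∀ s t, K' t s = (starRingEnd ℂ) (K' s t))
    (hK'cpd : IsCondPosDefKernelC K')
    (hK'diag : ∀ s, K' s s = 0)
    (hK'real : ∀ s, (K' s s₀).im = 0)
    {F : Type*} [NormedAddCommGroup F] [InnerProductSpace ℂ F] [CompleteSpace F]
    (V : S → F)
    (hV : ∀ s t, (inner ℂ (V s) (V t) : ℂ)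
      = 2⁻¹ * (K s t - K s s₀ - K s₀ t + K s₀ s₀))
    (hdense : Dense (Submodule.span ℂ (Set.range V) : Set F)) :
    IsCondPosDefKernelC (fun s t => K s t - K' s t) ↔
      ∃ C : F →L[ℂ] F, C.IsPositive ∧ ‖C‖ ≤ 1 ∧
        ∀ s t, K' s t = 2 * (inner ℂ (C (V s)) (C (V t)) : ℂ)
          - (inner ℂ (C (V s)) (C (V s)) : ℂ) - (inner ℂ (C (V t)) (C (V t)) : ℂ) := by
  have hV₀ : V s₀ = 0 := inner_self_eq_zero.mp (by rw [hV]; ring)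
  have hcenter : centeredKernel (fun s t => K s t - K' s t) s₀
      = fun s t => ⟪V s, V t⟫_ℂ - centeredKernel K' s₀ s t := by
    funext s t
    rw [hV, centeredKernel, centeredKernel]
    ring
  have hM := (isCondPosDefKernelC_iff_isPosSemidefKernel_centeredKernel K' s₀).mp hK'cpd
  rw [isCondPosDefKernelC_iff_isPosSemidefKernel_centeredKernel _ s₀, hcenter,
    isPosSemidefKernel_inner_sub_iff_exists_contraction hdense hM (centeredKernel_conj hK' s₀)]
  refine exists_congr fun C => and_congr_right fun _ => and_congr_right fun _ => ?_
  exact (forall_eq_two_mul_sub_iff_centeredKernel_eq hK' hK'diag hK'real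
    (fun s => by simp [hV₀]) (fun t => by simp [hV₀])).symm

/-- Characterization of the order `K' ≤ K` between scalar conditionally positive definite
kernels vanishing on the diagonal, with `K(·,s₀)`, `K'(·,s₀)` real, in terms of a positive
contraction `C` acting on a minimal Kolmogorov decomposition `(V, F)` of `K`. -/
theorem condPosDef_order_iff_exists_contraction {S : Type*} [Nonempty S] (s₀ : S)
    (K K' : S → S → ℂ)
    (hK : ∀ s t, K t s = (starRingEnd ℂ) (K s t))
    (hK' : ∀ s t, K' t s = (starRingEnd ℂ) (K' s t))
    (hKcpd : IsCondPosDefKernelC K) (hK'cpd : IsCondPosDefKernelC K')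
    (hKdiag : ∀ s, K s s = 0) (hK'diag : ∀ s, K' s s = 0)
    (hKreal : ∀ s, (K s s₀).im = 0) (hK'real : ∀ s, (K' s s₀).im = 0)
    {F : Type*} [NormedAddCommGroup F] [InnerProductSpace ℂ F] [CompleteSpace F]
    (V : S → F)
    (hV : ∀ s t, (inner ℂ (V s) (V t) : ℂ)
      = 2⁻¹ * (K s t - K s s₀ - K s₀ t + K s₀ s₀))
    (hdense : Dense (Submodule.span ℂ (Set.range V) : Set F)) :
    IsCondPosDefKernelC (fun s t => K s t - K' s t) ↔
      ∃ C : F →L[ℂ] F, C.IsPositive ∧ ‖C‖ ≤ 1 ∧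
        ∀ s t, K' s t = 2 * (inner ℂ (C (V s)) (C (V t)) : ℂ)
          - (inner ℂ (C (V s)) (C (V s)) : ℂ) - (inner ℂ (C (V t)) (C (V t)) : ℂ) :=
  condPosDef_order_iff_exists_contraction_general s₀ K K' hK' hK'cpd hK'diag hK'real V hV hdense
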